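/- Let A be a countable alphabet, P a probability distribution on A with finite source entropy H(P), S a proper dictionary over A, and α ∈ S. If H(S) = H(P)·l̄(S), then the extended dictionary also satisfies H(S[α]) = H(P)·l̄(S[α]). -/

import Mathlib

open scoped ENNReal
open Filter

/-- The probability of a finite string, obtained by extending the
distribution `P` multiplicatively: `P(a₁⋯aₙ) = ∏ᵢ P(aᵢ)`. -/
noncomputable def strProb {A : Type*} (P : PMF A) (l : List A) : ℝ≥0∞ :=
  (l.map fun a => P a).prod

/-- A dictionary is a set of nonempty finite strings. -/
def IsDictionary {A : Type*} (D : Set (List A)) : Prop :=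
  ∀ α ∈ D, α ≠ []

/-- A dictionary is proper if no string in it is a (proper) prefix of
another string in it. -/
def IsProper {A : Type*} (D : Set (List A)) : Prop :=
  ∀ α ∈ D, ∀ β ∈ D, α <+: β → α = β

/-- A dictionary is complete if every infinite sequence over `A` has a
prefix in it. -/
def IsCompleteDict {A : Type*} (D : Set (List A)) : Prop :=
  ∀ x : ℕ → A, ∃ α ∈ D, α = (List.range α.length).map x

/-- The probability that the length-`n` prefix of a random infinite sequence
has some prefix belonging to `D`. -/
noncomputable def prefixProb {A : Type*} (P : PMF A) (D : Set (List A)) (n : ℕ) : ℝ≥0∞ :=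
  ∑' γ : {γ : List A // γ.length = n ∧ ∃ β ∈ D, β <+: γ}, strProb P γ

/-- `D` is almost surely complete: under the infinite product measure `P^ℕ`,
the event that an infinite sequence has a prefix in `D` has probability `1`.
(By continuity from below, this probability is the limit, as `n → ∞`, of the
probability that the length-`n` prefix has a prefix in `D`.) -/
def IsASC {A : Type*} (P : PMF A) (D : Set (List A)) : Prop :=
  Tendsto (prefixProb P D) atTop (nhds 1)

/-- `Tset D n` = strings of length `n` having no prefix in `D`. -/
def Tset {A : Type*} (D : Set (List A)) (n : ℕ) : Set (List A) :=
  {α | α.length = n ∧ ∀ β ∈ D, ¬ β <+: α}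

/-- `Dperp D n = {α ∈ D : |α| = n} ∪ Tₙ`. -/
def Dperp {A : Type*} (D : Set (List A)) (n : ℕ) : Set (List A) :=
  {α ∈ D | α.length = n} ∪ Tset D n

/-- `Dn D n = {α ∈ D : |α| < n} ∪ Dₙ^⊥`. -/
def Dn {A : Type*} (D : Set (List A)) (n : ℕ) : Set (List A) :=
  {α ∈ D | α.length < n} ∪ Dperp D n

/-- The one-letter extensions `αA = {αa : a ∈ A}` of a string `α`. -/
def oneExt {A : Type*} (α : List A) : Set (List A) :=
  {l | ∃ a : A, l = α ++ [a]}

/-- The extension `D[α] = (D \ {α}) ∪ αA` of a dictionary at `α`. -/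
def extendDict {A : Type*} (D : Set (List A)) (α : List A) : Set (List A) :=
  (D \ {α}) ∪ oneExt α

/-- The nonnegative entropy contribution `-p log₂ p ∈ [0,∞]` of a
probability value `p`. -/
noncomputable def entTerm (p : ℝ≥0∞) : ℝ≥0∞ :=
  ENNReal.ofReal (-(p.toReal * Real.logb 2 p.toReal))

/-- The entropy `H(E) = -∑_{α∈E} P(α) log₂ P(α)` of a dictionary, in `[0,∞]`. -/
noncomputable def dictEntropy {A : Type*} (P : PMF A) (E : Set (List A)) : ℝ≥0∞ :=
  ∑' α : E, entTerm (strProb P α)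

/-- The average length `l̄(E) = ∑_{α∈E} P(α)|α|` of a dictionary, in `[0,∞]`. -/
noncomputable def avgLen {A : Type*} (P : PMF A) (E : Set (List A)) : ℝ≥0∞ :=
  ∑' α : E, strProb P α * (α : List A).length

/-- The source entropy `H(P) = -∑_{a∈A} P(a) log₂ P(a)`, in `[0,∞]`. -/
noncomputable def srcEntropy {A : Type*} (P : PMF A) : ℝ≥0∞ :=
  ∑' a : A, entTerm (P a)

/-!
Extending `S` at `α` replaces the word `α` by the words `αa`, `a ∈ A`. Since
`-P(αa) log P(αa) = P(a)·(-P(α) log P(α)) + P(α)·(-P(a) log P(a))`, this raises the entropy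
by `P(α)·H(P)`, while it raises the average length by `∑ₐ P(αa) = P(α)`. Both sides of
`H(S) = H(P)·l̄(S)` therefore grow by the same amount `P(α)·H(P)`.
-/

lemma ENNReal.tsum_setElem_eq_tsum_sdiff_singleton_add {β : Type*} {s : Set β} {b : β}
    (hb : b ∈ s) (f : β → ℝ≥0∞) :
    ∑' x : s, f x = ∑' x : (s \ {b} : Set β), f x + f b := by
  conv_lhs => rw [← Set.sdiff_union_of_subset (Set.singleton_subset_iff.2 hb)]
  rw [ENNReal.summable.tsum_union_disjoint Set.disjoint_sdiff_left ENNReal.summable,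
    tsum_singleton]

lemma entTerm_eq_ofReal_negMulLog (p : ℝ≥0∞) :
    entTerm p = ENNReal.ofReal (Real.negMulLog p.toReal / Real.log 2) := by
  rw [entTerm, Real.negMulLog, Real.logb]
  ring_nf

lemma entTerm_mul {p q : ℝ≥0∞} (hp : p ≤ 1) (hq : q ≤ 1) :
    entTerm (p * q) = q * entTerm p + p * entTerm q := by
  have hp' : p ≠ ⊤ := ne_top_of_le_ne_top ENNReal.one_ne_top hp
  have hq' : q ≠ ⊤ := ne_top_of_le_ne_top ENNReal.one_ne_top hq
  have hlog2 : 0 < Real.log 2 := Real.log_pos one_lt_two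
  have hnonneg {r : ℝ≥0∞} (hr : r ≤ 1) : 0 ≤ Real.negMulLog r.toReal / Real.log 2 :=
    div_nonneg (Real.negMulLog_nonneg ENNReal.toReal_nonneg (ENNReal.toReal_le_of_le_ofReal
      zero_le_one (by rwa [ENNReal.ofReal_one]))) hlog2.le
  rw [entTerm_eq_ofReal_negMulLog, entTerm_eq_ofReal_negMulLog, entTerm_eq_ofReal_negMulLog,
    ENNReal.toReal_mul, Real.negMulLog_mul, add_div, mul_div_assoc, mul_div_assoc,
    ENNReal.ofReal_add (mul_nonneg ENNReal.toReal_nonneg (hnonneg hp))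
      (mul_nonneg ENNReal.toReal_nonneg (hnonneg hq)),
    ENNReal.ofReal_mul ENNReal.toReal_nonneg, ENNReal.ofReal_mul ENNReal.toReal_nonneg,
    ENNReal.ofReal_toReal hp', ENNReal.ofReal_toReal hq']

section Strings

variable {A : Type*}

@[simp]
lemma strProb_append (P : PMF A) (l m : List A) :
    strProb P (l ++ m) = strProb P l * strProb P m := by
  simp [strProb]

@[simp]
lemma strProb_singleton (P : PMF A) (a : A) : strProb P [a] = P a := by
  simp [strProb]

lemma strProb_le_one (P : PMF A) (l : List A) : strProb P l ≤ 1 :=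
  (List.prod_le_pow_card _ 1 (by simp [P.coe_le_one])).trans_eq (one_pow _)

lemma oneExt_eq_range (α : List A) : oneExt α = Set.range fun a : A => α ++ [a] := by
  ext l
  exact exists_congr fun _ => eq_comm

lemma tsum_oneExt (α : List A) (f : List A → ℝ≥0∞) :
    ∑' x : oneExt α, f x = ∑' a : A, f (α ++ [a]) := by
  rw [oneExt_eq_range]
  exact tsum_range f fun a b hab => List.singleton_injective (List.append_cancel_left hab)

lemma IsProper.disjoint_sdiff_singleton_oneExt {S : Set (List A)} (hprop : IsProper S)
    {α : List A} (hα : α ∈ S) : Disjoint (S \ {α}) (oneExt α) := by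
  rw [Set.disjoint_left]
  rintro _ ⟨hS, hne⟩ ⟨a, rfl⟩
  exact hne (hprop α hα _ hS (List.prefix_append _ _)).symm

lemma IsProper.tsum_extendDict {S : Set (List A)} (hprop : IsProper S) {α : List A}
    (hα : α ∈ S) (f : List A → ℝ≥0∞) :
    ∑' x : extendDict S α, f x = ∑' x : (S \ {α} : Set (List A)), f x + ∑' a, f (α ++ [a]) := by
  rw [extendDict, ENNReal.summable.tsum_union_disjoint
    (hprop.disjoint_sdiff_singleton_oneExt hα) ENNReal.summable, tsum_oneExt]

lemma tsum_entTerm_strProb_append_singleton (P : PMF A) (α : List A) :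
    ∑' a, entTerm (strProb P (α ++ [a])) = entTerm (strProb P α) + strProb P α * srcEntropy P := by
  simp only [strProb_append, strProb_singleton,
    entTerm_mul (strProb_le_one P α) (P.coe_le_one _)]
  rw [ENNReal.tsum_add, ENNReal.tsum_mul_right, ENNReal.tsum_mul_left, P.tsum_coe, one_mul,
    srcEntropy]

lemma tsum_strProb_mul_length_append_singleton (P : PMF A) (α : List A) :
    ∑' a, strProb P (α ++ [a]) * ((α ++ [a]).length : ℝ≥0∞) =
      strProb P α * α.length + strProb P α := by
  simp only [strProb_append, strProb_singleton, List.length_append, List.length_singleton,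
    Nat.cast_add, Nat.cast_one]
  simp_rw [mul_comm (strProb P α), mul_assoc]
  rw [ENNReal.tsum_mul_right, P.tsum_coe, one_mul]
  ring

lemma IsProper.dictEntropy_extendDict (P : PMF A) {S : Set (List A)} (hprop : IsProper S)
    {α : List A} (hα : α ∈ S) :
    dictEntropy P (extendDict S α) = dictEntropy P S + strProb P α * srcEntropy P := by
  rw [dictEntropy, dictEntropy, hprop.tsum_extendDict hα fun l => entTerm (strProb P l),
    ENNReal.tsum_setElem_eq_tsum_sdiff_singleton_add hα fun l => entTerm (strProb P l),
    tsum_entTerm_strProb_append_singleton, add_assoc]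

lemma IsProper.avgLen_extendDict (P : PMF A) {S : Set (List A)} (hprop : IsProper S)
    {α : List A} (hα : α ∈ S) :
    avgLen P (extendDict S α) = avgLen P S + strProb P α := by
  rw [avgLen, avgLen, hprop.tsum_extendDict hα fun l => strProb P l * l.length,
    ENNReal.tsum_setElem_eq_tsum_sdiff_singleton_add hα fun l => strProb P l * l.length,
    tsum_strProb_mul_length_append_singleton, add_assoc]

end Strings

theorem extendDict_preserves_entropy_eq_general {A : Type*} (P : PMF A)
    (S : Set (List A))
    (hprop : IsProper S) (α : List A) (hα : α ∈ S)
    (h : dictEntropy P S = srcEntropy P * avgLen P S) :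
    dictEntropy P (extendDict S α) = srcEntropy P * avgLen P (extendDict S α) := by
  rw [hprop.dictEntropy_extendDict P hα, hprop.avgLen_extendDict P hα, h, mul_add,
    mul_comm (strProb P α)]

/-- For a proper dictionary `S` and `α ∈ S` with finite source
entropy: if `H(S) = H(P)·l̄(S)` then `H(S[α]) = H(P)·l̄(S[α])`. -/
theorem extendDict_preserves_entropy_eq {A : Type*} [Countable A] (P : PMF A)
    (hH : srcEntropy P < ⊤) (S : Set (List A)) (hdict : IsDictionary S)
    (hprop : IsProper S) (α : List A) (hα : α ∈ S)
    (h : dictEntropy P S = srcEntropy P * avgLen P S) :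
    dictEntropy P (extendDict S α) = srcEntropy P * avgLen P (extendDict S α) :=
  extendDict_preserves_entropy_eq_general P S hprop α hα h
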